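/- If x, y are p-adic integers with φ(x) = φ(y) and x ≠ y, then (after possibly swapping x and y) there exists k ≥ 1 and digits a_0, …, a_{k-1} with a_{k-1} > 0 such that x = a_0 + a_1 p + ⋯ + a_{k-1} p^{k-1} and y = a_0 + a_1 p + ⋯ + (a_{k-1}-1) p^{k-1} + Σ_{i≥k} (p-1) p^i. -/

import Mathlib

/-!
The Monna map reads the base-`p` digits of `x` as the real number `0.a₀a₁a₂…` in base `p`.
If two digit sequences first differ at place `n`, say `aₙ > bₙ`, equality of their real values
says `(aₙ - bₙ) + 0.aₙ₊₁aₙ₊₂… = 0.bₙ₊₁bₙ₊₂…`. Both tails lie in `[0, 1]` and `aₙ - bₙ ≥ 1`, so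
`aₙ = bₙ + 1`, the first tail vanishes and the second equals `1`, i.e. consists of the digit `p - 1`
only. Summing the digits back as `p`-adic series gives the two expansions.
-/

open Filter Finset MeasureTheory
open scoped Classical

variable (p : ℕ) [hp : Fact p.Prime]

/-- The `i`-th base-`p` digit of a `p`-adic integer. -/
noncomputable def digit (x : ℤ_[p]) (i : ℕ) : ℕ := x.appr (i + 1) / p ^ i % p

/-- The Monna map `φ : ℤ_p → [0,1]`, `φ(Σ aᵢ pⁱ) = Σ aᵢ p^{-i-1}`. -/
noncomputable def monna (x : ℤ_[p]) : ℝ := ∑' i : ℕ, (digit p x i : ℝ) / (p : ℝ) ^ (i + 1)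

open Topology

namespace Real

variable {b : ℕ}

theorem ofDigits_eq_zero_iff (d : ℕ → Fin b) : ofDigits d = 0 ↔ ∀ i, (d i : ℕ) = 0 := by
  have hb : (b : ℝ) ≠ 0 := by exact_mod_cast (Fin.pos (d 0)).ne'
  rw [ofDigits, summable_ofDigitsTerm.hasSum_iff.symm,
    hasSum_zero_iff_of_nonneg fun _ ↦ ofDigitsTerm_nonneg, funext_iff]
  simp [ofDigitsTerm, hb]

theorem ofDigits_rev (hb : 1 < b) (d : ℕ → Fin b) :
    ofDigits (fun i ↦ (d i).rev) = 1 - ofDigits d := by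
  rw [eq_sub_iff_add_eq, ← ofDigits_const_last_eq_one' hb, ofDigits, ofDigits, ofDigits,
    ← summable_ofDigitsTerm.tsum_add summable_ofDigitsTerm]
  congr with i
  have := (d i).isLt
  simp only [ofDigitsTerm, Fin.val_rev, ← add_mul]
  congr 1
  push_cast [Nat.cast_sub (show (d i : ℕ) + 1 ≤ b by omega), Nat.cast_sub hb.le]
  ring

theorem ofDigits_eq_one_iff (hb : 1 < b) (d : ℕ → Fin b) :
    ofDigits d = 1 ↔ ∀ i, (d i : ℕ) = b - 1 := by
  rw [eq_comm, ← sub_eq_zero, ← ofDigits_rev hb, ofDigits_eq_zero_iff]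
  refine forall_congr' fun i ↦ ?_
  have := (d i).isLt
  rw [Fin.val_rev]
  omega

theorem digits_of_ofDigits_eq_of_lt (hb : 1 < b) {d e : ℕ → Fin b}
    (h : ofDigits d = ofDigits e) {n : ℕ} (hpre : ∀ i < n, d i = e i) (hlt : e n < d n) :
    (d n : ℕ) = e n + 1 ∧ (∀ i, (d (i + (n + 1)) : ℕ) = 0) ∧
      ∀ i, (e (i + (n + 1)) : ℕ) = b - 1 := by
  have hsum : ∑ i ∈ range (n + 1), ofDigitsTerm d i
      = ∑ i ∈ range (n + 1), ofDigitsTerm e i + ((d n : ℝ) - e n) * ((b : ℝ) ^ (n + 1))⁻¹ := by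
    have hprefix : ∑ i ∈ range n, ofDigitsTerm d i = ∑ i ∈ range n, ofDigitsTerm e i :=
      sum_congr rfl fun i hi ↦ by simp only [ofDigitsTerm, hpre i (mem_range.1 hi)]
    rw [sum_range_succ, sum_range_succ, hprefix]
    simp only [ofDigitsTerm]
    ring
  rw [ofDigits_eq_sum_add_ofDigits d (n + 1), ofDigits_eq_sum_add_ofDigits e (n + 1), hsum] at h
  have hgap : (d n : ℝ) - e n + ofDigits (fun i ↦ d (i + (n + 1)))
      = ofDigits (fun i ↦ e (i + (n + 1))) := by
    have : (0 : ℝ) < (b : ℝ) ^ (n + 1) := by positivity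
    field_simp at h
    linarith
  have h1 : (1 : ℝ) ≤ (d n : ℝ) - e n := by
    have : (e n : ℕ) + 1 ≤ d n := hlt
    rw [le_sub_iff_add_le']
    exact_mod_cast this
  have hd0 := ofDigits_nonneg fun i ↦ d (i + (n + 1))
  have he1 := ofDigits_le_one fun i ↦ e (i + (n + 1))
  refine ⟨?_, (ofDigits_eq_zero_iff _).1 (by linarith), (ofDigits_eq_one_iff hb _).1 (by linarith)⟩
  have : (d n : ℝ) = e n + 1 := by linarith
  exact_mod_cast this

end Real

theorem digit_lt (x : ℤ_[p]) (i : ℕ) : digit p x i < p := Nat.mod_lt _ hp.out.pos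

theorem monna_eq_ofDigits (x : ℤ_[p]) :
    monna p x = Real.ofDigits fun i ↦ (⟨digit p x i, digit_lt p x i⟩ : Fin p) := by
  simp only [monna, Real.ofDigits, Real.ofDigitsTerm, div_eq_mul_inv]

theorem appr_succ (x : ℤ_[p]) (i : ℕ) :
    x.appr (i + 1) = x.appr i + digit p x i * p ^ i := by
  have hmod : x.appr (i + 1) % p ^ i = x.appr i := by
    have := (Nat.modEq_iff_dvd' (x.appr_mono i.le_succ)).2 (x.dvd_appr_sub_appr i _ i.le_succ)
    rw [← this, Nat.mod_eq_of_lt (x.appr_lt i)]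
  have hdiv : x.appr (i + 1) / p ^ i < p :=
    Nat.div_lt_of_lt_mul (by rw [← pow_succ]; exact x.appr_lt _)
  rw [digit, Nat.mod_eq_of_lt hdiv, ← hmod, mul_comm]
  exact (Nat.mod_add_div _ _).symm

theorem appr_eq_sum_digit (x : ℤ_[p]) (n : ℕ) :
    x.appr n = ∑ i ∈ range n, digit p x i * p ^ i := by
  induction n with
  | zero => rfl
  | succ n ih => rw [appr_succ, ih, sum_range_succ]

theorem tendsto_pow_norm_p : Tendsto (fun n : ℕ ↦ ‖(p : ℤ_[p])‖ ^ n) atTop (𝓝 0) :=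
  tendsto_pow_atTop_nhds_zero_of_lt_one (norm_nonneg _)
    ((PadicInt.norm_lt_one_iff_dvd _).2 dvd_rfl)

theorem tendsto_appr (x : ℤ_[p]) : Tendsto (fun n ↦ (x.appr n : ℤ_[p])) atTop (𝓝 x) := by
  rw [tendsto_iff_norm_sub_tendsto_zero]
  refine squeeze_zero (fun _ ↦ norm_nonneg _) (fun n ↦ ?_) (tendsto_pow_norm_p p)
  rw [norm_sub_rev, ← norm_pow, PadicInt.norm_p_pow]
  exact ((x - x.appr n).norm_le_pow_iff_mem_span_pow n).2 (x.appr_spec n)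

theorem summable_mul_p_pow (c : ℕ → ℤ_[p]) : Summable fun i ↦ c i * (p : ℤ_[p]) ^ i := by
  refine NonarchimedeanAddGroup.summable_of_tendsto_cofinite_zero ?_
  rw [Nat.cofinite_eq_atTop]
  refine squeeze_zero_norm (fun i ↦ ?_) (tendsto_pow_norm_p p)
  rw [norm_mul, norm_pow]
  exact mul_le_of_le_one_left (by positivity) (PadicInt.norm_le_one _)

theorem hasSum_digit (x : ℤ_[p]) :
    HasSum (fun i ↦ (digit p x i : ℤ_[p]) * (p : ℤ_[p]) ^ i) x := by
  rw [(summable_mul_p_pow p _).hasSum_iff_tendsto_nat]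
  simpa [appr_eq_sum_digit] using tendsto_appr p x

theorem eq_of_forall_digit_eq {x y : ℤ_[p]} (h : ∀ i, digit p x i = digit p y i) : x = y :=
  (hasSum_digit p x).unique (by simpa only [h] using hasSum_digit p y)

theorem eq_digit_sum_of_monna_eq_of_digit_lt {x y : ℤ_[p]} (h : monna p x = monna p y) {n : ℕ}
    (hpre : ∀ i < n, digit p x i = digit p y i) (hlt : digit p y n < digit p x n) :
    x = ∑ i ∈ range (n + 1), (digit p x i : ℤ_[p]) * (p : ℤ_[p]) ^ i ∧
      y = (∑ i ∈ range (n + 1), (digit p x i : ℤ_[p]) * (p : ℤ_[p]) ^ i) - (p : ℤ_[p]) ^ n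
        + ∑' i : ℕ, ((p : ℤ_[p]) - 1) * (p : ℤ_[p]) ^ (n + 1 + i) := by
  rw [monna_eq_ofDigits, monna_eq_ofDigits] at h
  obtain ⟨hn, hx, hy⟩ := Real.digits_of_ofDigits_eq_of_lt hp.out.one_lt h
    (fun i hi ↦ Fin.ext (hpre i hi)) hlt
  constructor
  · refine (hasSum_digit p x).unique (hasSum_sum_of_ne_finset_zero fun i hi ↦ ?_)
    obtain ⟨j, rfl⟩ : ∃ j, i = j + (n + 1) := ⟨i - (n + 1), by grind⟩
    rw [show digit p x (j + (n + 1)) = 0 from hx j, Nat.cast_zero, zero_mul]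
  · rw [← (hasSum_digit p y).tsum_eq, ← (summable_mul_p_pow p _).sum_add_tsum_nat_add (n + 1)]
    congr 1
    · have hprefix : ∑ i ∈ range n, (digit p y i : ℤ_[p]) * (p : ℤ_[p]) ^ i
          = ∑ i ∈ range n, (digit p x i : ℤ_[p]) * (p : ℤ_[p]) ^ i :=
        sum_congr rfl fun i hi ↦ by rw [hpre i (mem_range.1 hi)]
      rw [sum_range_succ, sum_range_succ, hprefix, show digit p x n = digit p y n + 1 from hn]
      push_cast
      ring
    · refine tsum_congr fun i ↦ ?_
      rw [show digit p y (i + (n + 1)) = p - 1 from hy i, Nat.cast_pred hp.out.pos, add_comm i]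

theorem stmt2 (x y : ℤ_[p]) (h : monna p x = monna p y) (hxy : x ≠ y) :
    ∃ (k : ℕ) (a : ℕ → ℕ), 1 ≤ k ∧ (∀ i, a i < p) ∧ 0 < a (k - 1) ∧
      ((x = ∑ i ∈ Finset.range k, (a i : ℤ_[p]) * (p : ℤ_[p]) ^ i ∧
        y = (∑ i ∈ Finset.range k, (a i : ℤ_[p]) * (p : ℤ_[p]) ^ i) - (p : ℤ_[p]) ^ (k - 1)
            + ∑' i : ℕ, ((p : ℤ_[p]) - 1) * (p : ℤ_[p]) ^ (k + i)) ∨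
       (y = ∑ i ∈ Finset.range k, (a i : ℤ_[p]) * (p : ℤ_[p]) ^ i ∧
        x = (∑ i ∈ Finset.range k, (a i : ℤ_[p]) * (p : ℤ_[p]) ^ i) - (p : ℤ_[p]) ^ (k - 1)
            + ∑' i : ℕ, ((p : ℤ_[p]) - 1) * (p : ℤ_[p]) ^ (k + i))) := by
  have hdiff : ∃ n, digit p x n ≠ digit p y n := by
    contrapose! hxy
    exact eq_of_forall_digit_eq p hxy
  set n := Nat.find hdiff
  have hpre : ∀ i < n, digit p x i = digit p y i := fun i hi ↦ not_not.1 (Nat.find_min hdiff hi)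
  rcases (Nat.find_spec hdiff).lt_or_gt with hlt | hlt
  · exact ⟨n + 1, digit p y, Nat.le_add_left 1 n, digit_lt p y, Nat.zero_lt_of_lt hlt,
      Or.inr (eq_digit_sum_of_monna_eq_of_digit_lt p h.symm (fun i hi ↦ (hpre i hi).symm) hlt)⟩
  · exact ⟨n + 1, digit p x, Nat.le_add_left 1 n, digit_lt p x, Nat.zero_lt_of_lt hlt,
      Or.inl (eq_digit_sum_of_monna_eq_of_digit_lt p h hpre hlt)⟩
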